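/- On a board of isolated stacks of heights one and two where every group has two or four tiles and no blocked cycle exists, the greedy strategy 'while the board is nonempty, play a match that introduces no new blocked cycle' always terminates with the empty board; in particular such a match always exists at every stage. -/

import Mathlib

/-- A board is a finite multiset of isolated stacks; each stack is a list of
tile groups, with the head of the list being the top tile of the stack. -/
abbrev Board (G : Type*) := Multiset (List G)

variable {G : Type*} [DecidableEq G]

/-- The number of tiles of group `g` remaining on the board. -/
def tileCount (B : Board G) (g : G) : ℕ := (B.map (fun s => s.count g)).sum

/-- The total number of tiles on the board. -/
def totalTiles (B : Board G) : ℕ := (B.map List.length).sum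

/-- The board obtained by removing the (playable) top tiles of stacks `s₁` and
`s₂`, the remaining stacks being `rest`; emptied stacks disappear. -/
def play (s₁ s₂ : List G) (rest : Board G) : Board G :=
  Multiset.filter (fun s => s ≠ []) (s₁.tail ::ₘ s₂.tail ::ₘ rest)

/-- A legal move: remove two playable (top) tiles of the same group. -/
def Move (B B' : Board G) : Prop :=
  ∃ (g : G) (s₁ s₂ : List G) (rest : Board G),
    B = s₁ ::ₘ s₂ ::ₘ rest ∧ s₁.head? = some g ∧ s₂.head? = some g ∧
    B' = play s₁ s₂ rest

/-- A board is solvable iff some sequence of legal moves empties it. -/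
def Solvable (B : Board G) : Prop := Relation.ReflTransGen Move B 0

/-- All stacks are nonempty and of height at most two. -/
def HeightsOK (B : Board G) : Prop := ∀ s ∈ B, s ≠ [] ∧ s.length ≤ 2

/-- A blocked cycle: distinct groups `p 0, …, p k`, each with exactly two
remaining tiles, such that for each `i` there is a height-two stack with a
`p (i+1)`-tile (cyclically) on top of a `p i`-tile. -/
def BlockedCycle (B : Board G) {k : ℕ} (p : Fin (k + 1) → G) : Prop :=
  Function.Injective p ∧ (∀ i, tileCount B (p i) = 2) ∧
    ∀ i, [p (i + 1), p i] ∈ B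

/-- The board contains some blocked cycle. -/
def HasBlockedCycle (B : Board G) : Prop :=
  ∃ (k : ℕ) (p : Fin (k + 1) → G), BlockedCycle B p

/-!
A move on a group `g` can only create blocked cycles through `g`: a cycle avoiding `g` lives on
stacks and groups the move does not touch, so it was already there.

A match always exists. Otherwise the top tiles belong to pairwise distinct groups, each of which
(having two or four tiles) also lies buried somewhere; as there are at most as many buried tiles as
stacks, tops and bottoms then carry exactly the same groups, once each. So every top group has two
tiles and lies under another top group, and following "the group above" inside this finite set
closes up into a blocked cycle.

Play any match of a group `g`. If this creates a blocked cycle `p`, then `p` runs through `g`, and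
the `g`-tile that closes `p` is the top of a stack `[g, a]`; play that tile together with the first
`g`-tile instead. A cycle created by this second move would again run through `g`; as every group
of `p` has exactly one tile on top and one buried, it would be forced to follow `p` stack by stack,
back through the stack `[g, a]`, which is gone.
-/

def tops (B : Board G) : Multiset G := B.bind fun s => ↑(s.take 1)

def bottoms (B : Board G) : Multiset G := B.bind fun s => ↑(s.drop 1)

def SizesOK (B : Board G) : Prop :=
  ∀ g, tileCount B g = 0 ∨ tileCount B g = 2 ∨ tileCount B g = 4

lemma notMem_of_count_bind_eq_one {α β : Type*} [DecidableEq α] [DecidableEq β]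
    {f : α → Multiset β} {C : Multiset α} {b : β} (h : (C.bind f).count b = 1) {s t : α}
    (hs : s ∈ C) (hbs : b ∈ f s) (ht : t ∈ C.erase s) : b ∉ f t := by
  intro hbt
  rw [← Multiset.cons_erase hs, ← Multiset.cons_erase ht] at h
  simp only [Multiset.cons_bind, Multiset.count_add] at h
  have h₁ := Multiset.count_pos.mpr hbs
  have h₂ := Multiset.count_pos.mpr hbt
  omega

lemma sum_map_filter_ne_nil {α : Type*} {f : List α → ℕ} (hf : f [] = 0) (C : Board α) :
    ((C.filter (· ≠ [])).map f).sum = (C.map f).sum := by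
  induction C using Multiset.induction_on with
  | empty => rfl
  | cons s C ih =>
    rcases eq_or_ne s [] with rfl | hs
    · simp [ih, hf]
    · rw [Multiset.filter_cons_of_pos (p := (· ≠ [])) _ hs, Multiset.map_cons, Multiset.sum_cons,
        ih, Multiset.map_cons, Multiset.sum_cons]

section

variable {α : Type*} {s₁ s₂ : List α} {rest : Board α}

lemma mem_tops {B : Board α} {a : α} : a ∈ tops B ↔ ∃ t, a :: t ∈ B := by
  constructor
  · simp only [tops, Multiset.mem_bind, Multiset.mem_coe]
    rintro ⟨_ | ⟨b, t⟩, hs, ha⟩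
    · simp at ha
    · simp only [List.take_succ_cons, List.take_zero, List.mem_singleton] at ha
      exact ⟨t, ha ▸ hs⟩
  · rintro ⟨t, h⟩
    exact Multiset.mem_bind.mpr ⟨_, h, by simp⟩

lemma mem_bottoms {B : Board α} (hH : HeightsOK B) {a : α} :
    a ∈ bottoms B ↔ ∃ c, [c, a] ∈ B := by
  constructor
  · simp only [bottoms, Multiset.mem_bind, Multiset.mem_coe]
    rintro ⟨s, hs, ha⟩
    match s, (hH s hs).2, ha with
    | [c, d], _, ha => exact ⟨c, by simp_all⟩
  · rintro ⟨c, h⟩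
    exact Multiset.mem_bind.mpr ⟨_, h, by simp⟩

lemma card_bottoms_le_card_tops {B : Board α} (hH : HeightsOK B) :
    Multiset.card (bottoms B) ≤ Multiset.card (tops B) := by
  rw [tops, bottoms, Multiset.card_bind, Multiset.card_bind]
  refine Multiset.sum_map_le_sum_map _ _ fun s hs => ?_
  obtain ⟨hne, hlen⟩ := hH s hs
  have := List.length_pos_iff.mpr hne
  simp only [Function.comp_apply, Multiset.coe_card, List.length_take, List.length_drop]
  omega

lemma mem_rest_of_mem_play (hH : HeightsOK (s₁ ::ₘ s₂ ::ₘ rest)) {a b : α}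
    (h : [a, b] ∈ play s₁ s₂ rest) : [a, b] ∈ rest := by
  have h₁ := (hH s₁ (by simp)).2
  have h₂ := (hH s₂ (by simp)).2
  simp only [play, Multiset.mem_filter, Multiset.mem_cons] at h
  rcases h.1 with h | h | h
  · exact absurd (congrArg List.length h) (by simp; omega)
  · exact absurd (congrArg List.length h) (by simp; omega)
  · exact h

lemma heightsOK_play (hH : HeightsOK (s₁ ::ₘ s₂ ::ₘ rest)) : HeightsOK (play s₁ s₂ rest) := by
  intro u hu
  simp only [play, Multiset.mem_filter, Multiset.mem_cons] at hu
  refine ⟨hu.2, ?_⟩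
  rcases hu.1 with rfl | rfl | h
  · simpa using (hH s₁ (by simp)).2.trans (by omega)
  · simpa using (hH s₂ (by simp)).2.trans (by omega)
  · exact (hH u (by simp [h])).2

lemma totalTiles_play {g : α} (h₁ : s₁.head? = some g) (h₂ : s₂.head? = some g) :
    totalTiles (s₁ ::ₘ s₂ ::ₘ rest) = totalTiles (play s₁ s₂ rest) + 2 := by
  obtain ⟨t₁, rfl⟩ := List.head?_eq_some_iff.mp h₁
  obtain ⟨t₂, rfl⟩ := List.head?_eq_some_iff.mp h₂
  simp only [play, totalTiles, sum_map_filter_ne_nil List.length_nil, Multiset.map_cons,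
    Multiset.sum_cons, List.length_cons, List.tail_cons]
  omega

lemma Move.heightsOK {B B' : Board α} (h : Move B B') (hH : HeightsOK B) : HeightsOK B' := by
  obtain ⟨g, s₁, s₂, rest, rfl, -, -, rfl⟩ := h
  exact heightsOK_play hH

lemma Move.totalTiles_lt {B B' : Board α} (h : Move B B') : totalTiles B' < totalTiles B := by
  obtain ⟨g, s₁, s₂, rest, rfl, h₁, h₂, rfl⟩ := h
  rw [totalTiles_play h₁ h₂]
  omega

end

lemma tileCount_eq_count_tops_add_count_bottoms (B : Board G) (a : G) :
    tileCount B a = (tops B).count a + (bottoms B).count a := by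
  simp only [tileCount, tops, bottoms, Multiset.count_bind, Multiset.coe_count,
    ← Multiset.sum_map_add, ← List.count_append, List.take_append_drop]

lemma tileCount_cons (s : List G) (B : Board G) (a : G) :
    tileCount (s ::ₘ B) a = s.count a + tileCount B a := by
  simp [tileCount]

lemma tileCount_pos_of_mem {B : Board G} {s : List G} {a : G} (hs : s ∈ B) (ha : a ∈ s) :
    0 < tileCount B a := by
  obtain ⟨C, rfl⟩ := Multiset.exists_cons_of_mem hs
  rw [tileCount_cons]
  exact Nat.add_pos_left (List.count_pos_iff.mpr ha) _

section

variable {g : G} {s₁ s₂ : List G} {rest : Board G}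

lemma count_le_count_play {u : List G} (hu : u ≠ []) :
    rest.count u ≤ (play s₁ s₂ rest).count u := by
  rw [play, Multiset.count_filter_of_pos (p := (· ≠ [])) hu]
  exact Multiset.count_le_of_le _ ((Multiset.le_cons_self _ _).trans (Multiset.le_cons_self _ _))

lemma tileCount_play (h₁ : s₁.head? = some g) (h₂ : s₂.head? = some g) (a : G) :
    tileCount (s₁ ::ₘ s₂ ::ₘ rest) a =
      tileCount (play s₁ s₂ rest) a + if a = g then 2 else 0 := by
  obtain ⟨t₁, rfl⟩ := List.head?_eq_some_iff.mp h₁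
  obtain ⟨t₂, rfl⟩ := List.head?_eq_some_iff.mp h₂
  have hfilter :
      tileCount (play (g :: t₁) (g :: t₂) rest) a = tileCount (t₁ ::ₘ t₂ ::ₘ rest) a :=
    sum_map_filter_ne_nil List.count_nil _
  rw [hfilter, tileCount_cons, tileCount_cons, tileCount_cons, tileCount_cons]
  rcases eq_or_ne a g with rfl | hne
  · simp only [List.count_cons_self, if_true]
    omega
  · simp [hne, hne.symm]

lemma Move.sizesOK {B B' : Board G} (h : Move B B') (hs : SizesOK B) : SizesOK B' := by
  obtain ⟨g, s₁, s₂, rest, rfl, h₁, h₂, rfl⟩ := h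
  intro a
  have hcount := tileCount_play (rest := rest) h₁ h₂ a
  split_ifs at hcount <;> rcases hs a with h | h | h <;> omega

end

namespace BlockedCycle

variable {C : Board G} {k : ℕ} {p : Fin (k + 1) → G}

lemma rotate (hp : BlockedCycle C p) (j : Fin (k + 1)) : BlockedCycle C fun i => p (i + j) :=
  ⟨hp.1.comp (add_left_injective j), fun i => hp.2.1 _, fun i => by
    simpa only [add_right_comm i 1 j] using hp.2.2 (i + j)⟩

lemma count_tops_eq_one_and_count_bottoms_eq_one (hp : BlockedCycle C p) (i : Fin (k + 1)) :
    (tops C).count (p i) = 1 ∧ (bottoms C).count (p i) = 1 := by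
  have htop : 0 < (tops C).count (p i) := Multiset.count_pos.mpr <|
    Multiset.mem_bind.mpr ⟨_, sub_add_cancel i 1 ▸ hp.2.2 (i - 1), by simp⟩
  have hbot : 0 < (bottoms C).count (p i) :=
    Multiset.count_pos.mpr <| Multiset.mem_bind.mpr ⟨_, hp.2.2 i, by simp⟩
  have := tileCount_eq_count_tops_add_count_bottoms C (p i)
  have := hp.2.1 i
  omega

lemma eq_succ_of_mem (hp : BlockedCycle C p) {i : Fin (k + 1)} {d : G} (hd : [d, p i] ∈ C) :
    d = p (i + 1) := by
  by_contra hne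
  refine notMem_of_count_bind_eq_one (hp.count_tops_eq_one_and_count_bottoms_eq_one i).2
    (hp.2.2 i) (by simp) ((Multiset.mem_erase_of_ne (by simpa using hne)).mpr hd) (by simp)

lemma singleton_notMem (hp : BlockedCycle C p) (i : Fin (k + 1)) : [p i] ∉ C := fun h =>
  notMem_of_count_bind_eq_one (hp.count_tops_eq_one_and_count_bottoms_eq_one i).1
    (sub_add_cancel i 1 ▸ hp.2.2 (i - 1)) (by simp)
    ((Multiset.mem_erase_of_ne (by simp)).mpr h) (by simp)

lemma count_eq_one (hp : BlockedCycle C p) (i : Fin (k + 1)) :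
    C.count [p (i + 1), p i] = 1 := by
  have hpos := Multiset.count_pos.mpr (hp.2.2 i)
  by_contra hne
  have htwice : [p (i + 1), p i] ∈ C.erase [p (i + 1), p i] := by
    rw [← Multiset.count_pos, Multiset.count_erase_self]
    omega
  exact notMem_of_count_bind_eq_one (hp.count_tops_eq_one_and_count_bottoms_eq_one i).2
    (hp.2.2 i) (by simp) htwice (by simp)

open Fin.NatCast in
lemma apply_natCast_eq {k' : ℕ} {q : Fin (k' + 1) → G} (hp : BlockedCycle C p)
    (hq0 : q 0 = p 0) (hq : ∀ i j, q i = p j → [q (i + 1), q i] ∈ C) (n : ℕ) :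
    q n = p n := by
  induction n with
  | zero => simpa using hq0
  | succ n ih =>
    simp only [Nat.cast_succ]
    exact hp.eq_succ_of_mem (ih ▸ hq _ _ ih)

end BlockedCycle

section

variable {g : G} {s₁ s₂ : List G} {rest : Board G}

lemma BlockedCycle.of_play {k : ℕ} {p : Fin (k + 1) → G} (hH : HeightsOK (s₁ ::ₘ s₂ ::ₘ rest))
    (h₁ : s₁.head? = some g) (h₂ : s₂.head? = some g) (hp : BlockedCycle (play s₁ s₂ rest) p)
    (hg : ∀ i, p i ≠ g) : BlockedCycle (s₁ ::ₘ s₂ ::ₘ rest) p :=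
  ⟨hp.1, fun i => by rw [tileCount_play h₁ h₂, hp.2.1, if_neg (hg i)],
    fun i => Multiset.mem_cons_of_mem <| Multiset.mem_cons_of_mem <|
      mem_rest_of_mem_play hH (hp.2.2 i)⟩

lemma exists_blockedCycle_play_apply_zero_eq (hH : HeightsOK (s₁ ::ₘ s₂ ::ₘ rest))
    (h₁ : s₁.head? = some g) (h₂ : s₂.head? = some g)
    (hnc : ¬ HasBlockedCycle (s₁ ::ₘ s₂ ::ₘ rest)) (h : HasBlockedCycle (play s₁ s₂ rest)) :
    ∃ (k : ℕ) (p : Fin (k + 1) → G), BlockedCycle (play s₁ s₂ rest) p ∧ p 0 = g := by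
  obtain ⟨k, p, hp⟩ := h
  by_cases hg : ∃ i, p i = g
  · obtain ⟨i, hi⟩ := hg
    exact ⟨k, _, hp.rotate i, by simpa using hi⟩
  · push Not at hg
    exact absurd ⟨k, p, hp.of_play hH h₁ h₂ hg⟩ hnc

open Fin.NatCast in
lemma not_hasBlockedCycle_play_of_blockedCycle {R : Board G} {k : ℕ} {p : Fin (k + 1) → G}
    (hH : HeightsOK (s₁ ::ₘ s₂ ::ₘ [g, p (Fin.last k)] ::ₘ R))
    (hnc : ¬ HasBlockedCycle (s₁ ::ₘ s₂ ::ₘ [g, p (Fin.last k)] ::ₘ R))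
    (h₁ : s₁.head? = some g) (h₂ : s₂.head? = some g)
    (hp : BlockedCycle (play s₁ s₂ ([g, p (Fin.last k)] ::ₘ R)) p) (hp0 : p 0 = g) :
    ¬ HasBlockedCycle (play [g, p (Fin.last k)] s₁ (s₂ ::ₘ R)) := by
  set a := p (Fin.last k)
  set C := play s₁ s₂ ([g, a] ::ₘ R)
  have hswap : s₁ ::ₘ s₂ ::ₘ [g, a] ::ₘ R = [g, a] ::ₘ s₁ ::ₘ s₂ ::ₘ R := by
    rw [Multiset.cons_swap s₂, Multiset.cons_swap s₁]
  rw [hswap] at hH hnc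
  intro hC'
  obtain ⟨k', q, hq, hq0⟩ := exists_blockedCycle_play_apply_zero_eq hH rfl h₁ hnc hC'
  have hC : ∀ {u}, u ∈ R → u ≠ [] → u ∈ C := fun hu hne => by simp [C, play, hu, hne]
  have hR : ∀ d j, [d, p j] ∈ play [g, a] s₁ (s₂ ::ₘ R) → [d, p j] ∈ R := by
    intro d j h
    rcases Multiset.mem_cons.mp (mem_rest_of_mem_play hH h) with rfl | h
    -- the tail `[p j]` of `s₂ = [d, p j]` would be a stack of `C`
    · exact absurd (by simp [C, play]) (hp.singleton_notMem j)
    · exact h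
  have hqp : ∀ n : ℕ, q n = p n := by
    refine hp.apply_natCast_eq (hq0.trans hp0.symm) fun i j hij => ?_
    have h := hq.2.2 i
    rw [hij] at h ⊢
    exact hC (hR _ _ h) (by simp)
  -- so `q` uses `[g, a]` again, a stack that occurs only once in `C`
  have hclose := hq.2.2 (k : Fin (k' + 1))
  rw [← Nat.cast_succ, hqp, hqp, Fin.natCast_self, hp0, Fin.natCast_eq_last] at hclose
  have htwice : 0 < R.count [g, a] := Multiset.count_pos.mpr (hR _ _ hclose)
  have hcount : C.count [g, a] = 1 := by
    simpa [hp0] using hp.count_eq_one (Fin.last k)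
  have hle : ([g, a] ::ₘ R).count [g, a] ≤ C.count [g, a] := count_le_count_play (by simp)
  rw [Multiset.count_cons_self] at hle
  omega

end

lemma hasBlockedCycle_of_forall_exists_mem {C : Board G} {S : Set G} (hS : S.Finite)
    (hne : S.Nonempty) (hcount : ∀ a ∈ S, tileCount C a = 2)
    (hup : ∀ a ∈ S, ∃ b ∈ S, [b, a] ∈ C) : HasBlockedCycle C := by
  obtain ⟨a₀, ha₀⟩ := hne
  choose! f hfS hfC using hup
  have hmaps : Set.MapsTo f S S := hfS
  obtain ⟨i, j, hij, heq⟩ :=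
    Set.Finite.exists_lt_map_eq_of_forall_mem (fun n => hmaps.iterate n ha₀) hS
  set c := f^[i] a₀
  have hcS : ∀ n, f^[n] c ∈ S := fun n => hmaps.iterate n (hmaps.iterate i ha₀)
  have hper : Function.IsPeriodicPt f (j - i) c := by
    rw [Function.IsPeriodicPt, Function.IsFixedPt, ← Function.iterate_add_apply,
      Nat.sub_add_cancel hij.le, heq]
  obtain ⟨k, hk⟩ := Nat.exists_eq_succ_of_ne_zero (hper.minimalPeriod_pos (by omega)).ne'
  refine ⟨k, fun n => f^[n] c, fun n₁ n₂ h => Fin.ext ?_, fun n => hcount _ (hcS n), fun n => ?_⟩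
  · exact Function.iterate_injOn_Iio_minimalPeriod (by simp [hk, Fin.is_le])
      (by simp [hk, Fin.is_le]) h
  · have hval : ((n + 1 : Fin (k + 1)) : ℕ) = (n + 1) % Function.minimalPeriod f c := by
      rw [hk, Fin.val_add, Fin.val_one', Nat.add_mod_mod]
    simp only [hval, Function.iterate_mod_minimalPeriod_eq, Function.iterate_succ_apply']
    exact hfC _ (hcS n)

lemma exists_two_le_count_tops {B : Board G} (hne : B ≠ 0) (hH : HeightsOK B) (hs : SizesOK B)
    (hnc : ¬ HasBlockedCycle B) : ∃ g, 2 ≤ (tops B).count g := by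
  by_contra! hlt
  have hnodup : (tops B).Nodup :=
    Multiset.nodup_iff_count_le_one.mpr fun g => Nat.le_of_lt_succ (hlt g)
  have hsub : tops B ≤ bottoms B := (Multiset.le_iff_subset hnodup).mpr fun a ha => by
    obtain ⟨t, ht⟩ := mem_tops.mp ha
    have hpos := tileCount_pos_of_mem ht List.mem_cons_self
    have hsplit := tileCount_eq_count_tops_add_count_bottoms B a
    have := hlt a
    rw [← Multiset.count_pos]
    rcases hs a with h | h | h <;> omega
  have heq : tops B = bottoms B :=
    Multiset.eq_of_le_of_card_le hsub (card_bottoms_le_card_tops hH)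
  refine hnc (hasBlockedCycle_of_forall_exists_mem (S := {a | a ∈ tops B})
    (Multiset.finite_toSet _) ?_ (fun a ha => ?_) (fun a ha => ?_))
  · obtain ⟨s, hsB⟩ := Multiset.exists_mem_of_ne_zero hne
    obtain ⟨a, t, rfl⟩ := List.exists_cons_of_ne_nil (hH s hsB).1
    exact ⟨a, mem_tops.mpr ⟨t, hsB⟩⟩
  · have hone := Multiset.count_eq_one_of_mem hnodup ha
    rw [tileCount_eq_count_tops_add_count_bottoms, ← heq, hone]
  · obtain ⟨c, hc⟩ := (mem_bottoms hH).mp (heq ▸ ha)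
    exact ⟨c, mem_tops.mpr ⟨[a], hc⟩, hc⟩

lemma exists_eq_cons_cons_of_two_le_count_tops {B : Board G} {g : G}
    (h : 2 ≤ (tops B).count g) :
    ∃ s₁ s₂ rest, B = s₁ ::ₘ s₂ ::ₘ rest ∧ s₁.head? = some g ∧ s₂.head? = some g := by
  obtain ⟨t₁, h₁⟩ := mem_tops.mp (Multiset.count_pos.mp (by omega : 0 < (tops B).count g))
  obtain ⟨B', rfl⟩ := Multiset.exists_cons_of_mem h₁
  have : 1 ≤ (tops B').count g := by
    simpa [tops, Multiset.cons_bind, Multiset.count_add] using h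
  obtain ⟨t₂, h₂⟩ := mem_tops.mp (Multiset.count_pos.mp this)
  obtain ⟨rest, rfl⟩ := Multiset.exists_cons_of_mem h₂
  exact ⟨_, _, rest, rfl, rfl, rfl⟩

lemma exists_move_not_hasBlockedCycle {B : Board G} (hne : B ≠ 0) (hH : HeightsOK B)
    (hs : SizesOK B) (hnc : ¬ HasBlockedCycle B) : ∃ B', Move B B' ∧ ¬ HasBlockedCycle B' := by
  obtain ⟨g, hg⟩ := exists_two_le_count_tops hne hH hs hnc
  obtain ⟨s₁, s₂, rest, rfl, h₁, h₂⟩ := exists_eq_cons_cons_of_two_le_count_tops hg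
  by_cases hC : HasBlockedCycle (play s₁ s₂ rest)
  · obtain ⟨k, p, hp, hp0⟩ := exists_blockedCycle_play_apply_zero_eq hH h₁ h₂ hnc hC
    have hclose : [g, p (Fin.last k)] ∈ rest := by
      have h := hp.2.2 (Fin.last k)
      rw [Fin.last_add_one, hp0] at h
      exact mem_rest_of_mem_play hH h
    obtain ⟨R, rfl⟩ := Multiset.exists_cons_of_mem hclose
    refine ⟨_, ⟨g, _, s₁, s₂ ::ₘ R, ?_, rfl, h₁, rfl⟩,
      not_hasBlockedCycle_play_of_blockedCycle hH hnc h₁ h₂ hp hp0⟩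
    rw [Multiset.cons_swap s₂, Multiset.cons_swap s₁]
  · exact ⟨_, ⟨g, s₁, s₂, rest, rfl, h₁, h₂, rfl⟩, hC⟩

theorem reflTransGen_cycleFreeMove_zero (B : Board G) (hH : HeightsOK B) (hs : SizesOK B)
    (hnc : ¬ HasBlockedCycle B) :
    Relation.ReflTransGen (fun C C' => Move C C' ∧ ¬ HasBlockedCycle C') B 0 := by
  induction hN : totalTiles B using Nat.strong_induction_on generalizing B with
  | _ N ih =>
    rcases eq_or_ne B 0 with rfl | hne
    · rfl
    obtain ⟨B', hmove, hnc'⟩ := exists_move_not_hasBlockedCycle hne hH hs hnc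
    exact .head ⟨hmove, hnc'⟩ (ih _ (hN ▸ hmove.totalTiles_lt) B' (hmove.heightsOK hH)
      (hmove.sizesOK hs) hnc' rfl)

/-- on a cycle-free board with stacks of heights one and two and
groups of size two or four, the greedy strategy of always playing a match that
introduces no new blocked cycle empties the board; in particular such a match
exists whenever the board is nonempty. -/
theorem stmt17 (B : Board G) (hH : HeightsOK B)
    (hs : ∀ g : G, tileCount B g = 0 ∨ tileCount B g = 2 ∨ tileCount B g = 4)
    (hnc : ¬ HasBlockedCycle B) :
    Relation.ReflTransGen (fun C C' => Move C C' ∧ ¬ HasBlockedCycle C') B 0 ∧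
    (B ≠ 0 → ∃ B' : Board G, Move B B' ∧ ¬ HasBlockedCycle B') :=
  ⟨reflTransGen_cycleFreeMove_zero B hH hs hnc,
    fun hne => exists_move_not_hasBlockedCycle hne hH hs hnc⟩
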